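/- Assume κ ≠ 0 and let ν be real and m ≥ 1 an integer. For every function f smooth on Ω = {z ∈ ℂ : 1 + κ|z|² > 0} and every z ∈ Ω, (∇_{ν+κ} ∘ ∇_{ν+2κ} ∘ ⋯ ∘ ∇_{ν+mκ}) f (z) = (−1)^m (1+κ|z|²)^{ν/κ} · D^m [w ↦ (1+κ|w|²)^{−(ν/κ + m)} f(w)](z), where D denotes the first-order operator (D g)(w) = (1+κ|w|²)² (∂g/∂w)(w) and D^m its m-fold iterate. -/

import Mathlib

open Complex MeasureTheory Filter

/-- Wirtinger derivative ∂f/∂z = (1/2)(∂f/∂x − i ∂f/∂y). -/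
noncomputable def wderiv (f : ℂ → ℂ) (z : ℂ) : ℂ :=
  (fderiv ℝ f z 1 - Complex.I * fderiv ℝ f z Complex.I) / 2

/-- Anti-holomorphic Wirtinger derivative ∂f/∂z̄ = (1/2)(∂f/∂x + i ∂f/∂y). -/
noncomputable def wderivBar (f : ℂ → ℂ) (z : ℂ) : ℂ :=
  (fderiv ℝ f z 1 + Complex.I * fderiv ℝ f z Complex.I) / 2

/-- Twisted Laplacian L_κ^ν. -/
noncomputable def twistedLap (κ ν : ℝ) (f : ℂ → ℂ) (z : ℂ) : ℂ :=
  -(((1 + κ * Complex.normSq z : ℝ) : ℂ) ^ 2 * wderiv (wderivBar f) z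
    + (ν : ℂ) * ((1 + κ * Complex.normSq z : ℝ) : ℂ) *
        (z * wderiv f z - (starRingEnd ℂ) z * wderivBar f z)
    - (ν : ℂ) ^ 2 * ((Complex.normSq z : ℝ) : ℂ) * f z)

/-- (∇_α f)(z) = −(1+κ|z|²) ∂f/∂z + α z̄ f(z). -/
noncomputable def nabla (κ α : ℝ) (f : ℂ → ℂ) (z : ℂ) : ℂ :=
  -((1 + κ * Complex.normSq z : ℝ) : ℂ) * wderiv f z + (α : ℂ) * (starRingEnd ℂ) z * f z

/-- (∇*_α f)(z) = (1+κ|z|²) ∂f/∂z̄ + (α−κ) z f(z). -/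
noncomputable def nablaStar (κ α : ℝ) (f : ℂ → ℂ) (z : ℂ) : ℂ :=
  ((1 + κ * Complex.normSq z : ℝ) : ℂ) * wderivBar f z + ((α - κ : ℝ) : ℂ) * z * f z

/-- ∇_{ν+κ} ∘ ∇_{ν+2κ} ∘ ⋯ ∘ ∇_{ν+mκ} (the identity when m = 0). -/
noncomputable def nablaChain (κ : ℝ) : ℕ → ℝ → (ℂ → ℂ) → (ℂ → ℂ)
  | 0, _, f => f
  | m + 1, ν, f => nabla κ (ν + κ) (nablaChain κ m (ν + κ) f)

/-- (D g)(z) = (1+κ|z|²)² ∂g/∂z. -/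
noncomputable def Dop (κ : ℝ) (g : ℂ → ℂ) (z : ℂ) : ℂ :=
  ((1 + κ * Complex.normSq z : ℝ) : ℂ) ^ 2 * wderiv g z

/-- Generalized binomial coefficient C(r,k) for real r. -/
noncomputable def genBinom (r : ℝ) (k : ℕ) : ℝ :=
  (∏ i ∈ Finset.range k, (r - i)) / (Nat.factorial k)

/-- Jacobi polynomial P_j^{(a,b)}(x) with real parameters a, b. -/
noncomputable def jacobiP (a b : ℝ) (j : ℕ) (x : ℝ) : ℝ :=
  ∑ s ∈ Finset.range (j + 1),
    genBinom ((j : ℝ) + a) (j - s) * genBinom ((j : ℝ) + b) s *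
      ((x - 1) / 2) ^ s * ((x + 1) / 2) ^ (j - s)

/-- Pochhammer symbol (a)_n = a(a+1)⋯(a+n−1). -/
noncomputable def risingFactorial (a : ℝ) (n : ℕ) : ℝ :=
  ∏ i ∈ Finset.range n, (a + i)


/-!
Write `P_s = (1 + κ|z|²)^s`. Since `∂P_{s+1} = (s+1) κ z̄ P_s`, the Leibniz rule gives
`∇_{(s+1)κ} (P_{s+1} h) = -P_s · D h`: the zeroth-order term of `∇` cancels the derivative of the
weight. Inducting on `m` with `ν = sκ`, each `∇` peels off one factor `-D` and lowers the weight
exponent by one.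
-/

open scoped ContDiff

lemma wderiv_congr {f g : ℂ → ℂ} {z : ℂ} (h : f =ᶠ[nhds z] g) : wderiv f z = wderiv g z := by
  rw [wderiv, wderiv, h.fderiv_eq]

lemma wderiv_mul {f g : ℂ → ℂ} {z : ℂ} (hf : DifferentiableAt ℝ f z)
    (hg : DifferentiableAt ℝ g z) :
    wderiv (fun w => f w * g w) z = wderiv f z * g z + f z * wderiv g z := by
  simp only [wderiv, fderiv_fun_mul hf hg, add_apply, smul_apply, smul_eq_mul]
  ring

lemma wderiv_const_mul (a : ℂ) {g : ℂ → ℂ} {z : ℂ} (hg : DifferentiableAt ℝ g z) :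
    wderiv (fun w => a * g w) z = a * wderiv g z := by
  simp only [wderiv, fderiv_const_mul hg, smul_apply, smul_eq_mul]
  ring

lemma wderiv_ofReal_comp {φ : ℂ → ℝ} {φ' : ℂ →L[ℝ] ℝ} {z : ℂ} (h : HasFDerivAt φ φ' z) :
    wderiv (fun w => (φ w : ℂ)) z = ((φ' 1 : ℂ) - Complex.I * φ' Complex.I) / 2 := by
  have h' : HasFDerivAt (fun w => (φ w : ℂ)) (Complex.ofRealCLM.comp φ') z :=
    Complex.ofRealCLM.hasFDerivAt.comp z h
  rw [wderiv, h'.fderiv]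
  rfl

lemma contDiffOn_wderiv {g : ℂ → ℂ} {s : Set ℂ} (hs : IsOpen s) (hg : ContDiffOn ℝ ∞ g s) :
    ContDiffOn ℝ ∞ (wderiv g) s := by
  have hg' := ((contDiffOn_infty_iff_fderiv_of_isOpen hs).mp hg).2
  exact ((hg'.clm_apply contDiffOn_const).sub
    (contDiffOn_const.mul (hg'.clm_apply contDiffOn_const))).div_const 2

lemma isOpen_setOf_pos_one_add_mul_normSq (κ : ℝ) :
    IsOpen {z : ℂ | 0 < 1 + κ * Complex.normSq z} :=
  isOpen_lt continuous_const (continuous_const.add (continuous_const.mul Complex.continuous_normSq))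

lemma contDiff_one_add_mul_normSq (κ : ℝ) :
    ContDiff ℝ ∞ (fun w : ℂ => 1 + κ * Complex.normSq w) := by
  simp_rw [Complex.normSq_eq_norm_sq]
  exact contDiff_const.add (contDiff_const.mul (contDiff_norm_sq ℝ))

lemma hasFDerivAt_one_add_mul_normSq (κ : ℝ) (z : ℂ) :
    HasFDerivAt (fun w : ℂ => 1 + κ * Complex.normSq w) (κ • 2 • innerSL ℝ z) z := by
  simp_rw [Complex.normSq_eq_norm_sq]
  exact ((hasStrictFDerivAt_norm_sq z).hasFDerivAt.const_mul κ).const_add 1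

noncomputable def weight (κ p : ℝ) (w : ℂ) : ℂ :=
  (((1 + κ * Complex.normSq w) ^ p : ℝ) : ℂ)

lemma weight_add_one (κ p : ℝ) {z : ℂ} (hz : 0 < 1 + κ * Complex.normSq z) :
    weight κ (p + 1) z = weight κ p z * ((1 + κ * Complex.normSq z : ℝ) : ℂ) := by
  rw [weight, weight, Real.rpow_add_one hz.ne', Complex.ofReal_mul]

lemma weight_mul_weight_neg (κ p : ℝ) {z : ℂ} (hz : 0 < 1 + κ * Complex.normSq z) :
    weight κ p z * weight κ (-p) z = 1 := by
  rw [weight, weight, ← Complex.ofReal_mul, ← Real.rpow_add hz, add_neg_cancel, Real.rpow_zero,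
    Complex.ofReal_one]

lemma contDiffOn_weight (κ p : ℝ) :
    ContDiffOn ℝ ∞ (weight κ p) {z : ℂ | 0 < 1 + κ * Complex.normSq z} :=
  Complex.ofRealCLM.contDiff.comp_contDiffOn fun _ hz =>
    ((contDiff_one_add_mul_normSq κ).contDiffAt.rpow_const_of_ne hz.ne').contDiffWithinAt

lemma differentiableAt_weight (κ p : ℝ) {z : ℂ} (hz : 0 < 1 + κ * Complex.normSq z) :
    DifferentiableAt ℝ (weight κ p) z :=
  ((contDiffOn_weight κ p).contDiffAt
    ((isOpen_setOf_pos_one_add_mul_normSq κ).mem_nhds hz)).differentiableAt (by simp)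

lemma wderiv_weight (κ p : ℝ) {z : ℂ} (hz : 0 < 1 + κ * Complex.normSq z) :
    wderiv (weight κ p) z = p * κ * weight κ (p - 1) z * (starRingEnd ℂ) z := by
  refine (wderiv_ofReal_comp
    ((hasFDerivAt_one_add_mul_normSq κ z).rpow_const (p := p) (.inl hz.ne'))).trans ?_
  apply Complex.ext <;> simp [weight, Complex.inner] <;> ring

lemma nabla_congr {κ α : ℝ} {f g : ℂ → ℂ} {z : ℂ} (h : f =ᶠ[nhds z] g) :
    nabla κ α f z = nabla κ α g z := by
  rw [nabla, nabla, wderiv_congr h, h.eq_of_nhds]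

lemma nabla_const_mul {κ α : ℝ} (a : ℂ) {g : ℂ → ℂ} {z : ℂ} (hg : DifferentiableAt ℝ g z) :
    nabla κ α (fun w => a * g w) z = a * nabla κ α g z := by
  rw [nabla, nabla, wderiv_const_mul a hg]
  ring

lemma nabla_weight_mul (κ s : ℝ) {h : ℂ → ℂ} {z : ℂ} (hz : 0 < 1 + κ * Complex.normSq z)
    (hh : DifferentiableAt ℝ h z) :
    nabla κ ((s + 1) * κ) (fun w => weight κ (s + 1) w * h w) z
      = -(weight κ s z * Dop κ h z) := by
  rw [nabla, Dop, wderiv_mul (differentiableAt_weight κ _ hz) hh, wderiv_weight κ _ hz,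
    add_sub_cancel_right, weight_add_one κ s hz]
  push_cast
  ring

lemma contDiffOn_Dop (κ : ℝ) {g : ℂ → ℂ} {s : Set ℂ} (hs : IsOpen s)
    (hg : ContDiffOn ℝ ∞ g s) : ContDiffOn ℝ ∞ (Dop κ g) s :=
  ((Complex.ofRealCLM.contDiff.comp (contDiff_one_add_mul_normSq κ)).pow 2).contDiffOn.mul
    (contDiffOn_wderiv hs hg)

lemma contDiffOn_iterate_Dop (κ : ℝ) {g : ℂ → ℂ} {s : Set ℂ} (hs : IsOpen s)
    (hg : ContDiffOn ℝ ∞ g s) (m : ℕ) : ContDiffOn ℝ ∞ ((Dop κ)^[m] g) s := by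
  induction m with
  | zero => exact hg
  | succ m ih => exact Function.iterate_succ_apply' (Dop κ) m g ▸ contDiffOn_Dop κ hs ih

theorem nablaChain_mul_eq_weight_mul_iterate_Dop (κ : ℝ) {f : ℂ → ℂ}
    (hf : ContDiffOn ℝ ∞ f {z : ℂ | 0 < 1 + κ * Complex.normSq z}) (m : ℕ) (s : ℝ) {z : ℂ}
    (hz : 0 < 1 + κ * Complex.normSq z) :
    nablaChain κ m (s * κ) f z
      = (-1) ^ m * weight κ s z * (Dop κ)^[m] (fun w => weight κ (-(s + m)) w * f w) z := by
  induction m generalizing s z with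
  | zero => simp [nablaChain, ← mul_assoc, weight_mul_weight_neg κ s hz]
  | succ m ih =>
    have hΩ := isOpen_setOf_pos_one_add_mul_normSq κ
    set G := fun w => weight κ (-(s + (m + 1 : ℕ))) w * f w
    have hDG : DifferentiableAt ℝ ((Dop κ)^[m] G) z :=
      ((contDiffOn_iterate_Dop κ hΩ ((contDiffOn_weight κ _).mul hf) m).contDiffAt
        (hΩ.mem_nhds hz)).differentiableAt (by simp)
    have hchain : nablaChain κ m ((s + 1) * κ) f =ᶠ[nhds z]
        fun w => (-1) ^ m * (weight κ (s + 1) w * (Dop κ)^[m] G w) := by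
      filter_upwards [hΩ.mem_nhds hz] with w hw
      have hexp : -(s + 1 + m) = -(s + (m + 1 : ℕ)) := by push_cast; ring
      rw [ih (s + 1) hw, hexp, mul_assoc]
    rw [nablaChain, show s * κ + κ = (s + 1) * κ by ring, nabla_congr hchain,
      nabla_const_mul _ ((differentiableAt_weight κ _ hz).fun_mul hDG), nabla_weight_mul κ s hz hDG,
      Function.iterate_succ_apply']
    ring

theorem stmt6_general (κ : ℝ) (hκ : κ ≠ 0) (ν : ℝ) (m : ℕ) (f : ℂ → ℂ)
    (hf : ContDiffOn ℝ (⊤ : ℕ∞) f {z : ℂ | 0 < 1 + κ * Complex.normSq z})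
    (z : ℂ) (hz : 0 < 1 + κ * Complex.normSq z) :
    nablaChain κ m ν f z
      = (-1 : ℂ) ^ m * (((1 + κ * Complex.normSq z) ^ (ν / κ) : ℝ) : ℂ) *
          (Dop κ)^[m]
            (fun w => (((1 + κ * Complex.normSq w) ^ (-(ν / κ + m)) : ℝ) : ℂ) * f w) z := by
  have h := nablaChain_mul_eq_weight_mul_iterate_Dop κ hf m (ν / κ) hz
  rwa [div_mul_cancel₀ ν hκ] at h

theorem stmt6 (κ : ℝ) (hκ : κ ≠ 0) (ν : ℝ) (m : ℕ) (hm : 1 ≤ m) (f : ℂ → ℂ)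
    (hf : ContDiffOn ℝ (⊤ : ℕ∞) f {z : ℂ | 0 < 1 + κ * Complex.normSq z})
    (z : ℂ) (hz : 0 < 1 + κ * Complex.normSq z) :
    nablaChain κ m ν f z
      = (-1 : ℂ) ^ m * (((1 + κ * Complex.normSq z) ^ (ν / κ) : ℝ) : ℂ) *
          (Dop κ)^[m]
            (fun w => (((1 + κ * Complex.normSq w) ^ (-(ν / κ + m)) : ℝ) : ℂ) * f w) z :=
  stmt6_general κ hκ ν m f hf z hz
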